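/- arXiv:1803.10286 — 7 statements merged into one kernel-verified Lean document; each statement's English description precedes it below -/
import Mathlib

section
/- Let Ω ⊂ ℝ^d be a convex set, let x ∈ ℝ^d and let n be a unit vector such that ⟨y − x, n⟩ ≤ 0 for every y ∈ Ω (a supporting outward normal direction at x). Let r : [0,∞) → ℝ be nonincreasing and bounded, let K : ℝ^d → ℝ be defined by K(z) = r(‖z‖), and let ρ : ℝ^d → ℝ be integrable, nonnegative, and equal to zero outside Ω. Then for every s ≥ 0 one has ∫_{ℝ^d} K(x + s·n − y) ρ(y) dy ≤ ∫_{ℝ^d} K(x − y) ρ(y) dy; i.e., the convolution K*ρ is nonincreasing along the outward normal ray starting at x. -/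
open MeasureTheory
open scoped RealInnerProductSpace

/-- The convolution of a bounded radial nonincreasing kernel with a
nonnegative integrable density supported in a convex set `Ω` is nonincreasing along
an outward normal ray at a point `x` (i.e., along a direction `n` with
`⟪y - x, n⟫ ≤ 0` for all `y ∈ Ω`). -/
theorem stmt0 {d : ℕ} (Ω : Set (EuclideanSpace ℝ (Fin d)))
    (hΩ : Convex ℝ Ω)
    (x n : EuclideanSpace ℝ (Fin d)) (hn : ‖n‖ = 1)
    (hsupp : ∀ y ∈ Ω, ⟪y - x, n⟫ ≤ 0)
    (r : ℝ → ℝ) (hr : AntitoneOn r (Set.Ici 0))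
    (M : ℝ) (hrM : ∀ t ∈ Set.Ici (0:ℝ), |r t| ≤ M)
    (K : EuclideanSpace ℝ (Fin d) → ℝ) (hK : ∀ z, K z = r ‖z‖)
    (ρ : EuclideanSpace ℝ (Fin d) → ℝ)
    (hρint : Integrable ρ) (hρpos : ∀ y, 0 ≤ ρ y)
    (hρsupp : ∀ y ∉ Ω, ρ y = 0) :
    ∀ s : ℝ, 0 ≤ s →
      ∫ y, K (x + s • n - y) * ρ y ≤ ∫ y, K (x - y) * ρ y := by
  intro s hs
  -- measurable antitone extension of r
  set r' : ℝ → ℝ := fun t => r (max t 0) with hr'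
  have hr'anti : Antitone r' := by
    intro a b hab
    exact hr (Set.mem_Ici.mpr (le_max_right _ _)) (Set.mem_Ici.mpr (le_max_right _ _)) (max_le_max hab le_rfl)
  have hK' : ∀ z : EuclideanSpace ℝ (Fin d), K z = r' ‖z‖ := by
    intro z
    rw [hK, hr']
    simp [max_eq_left (norm_nonneg z)]
  have hKmeas : ∀ c : EuclideanSpace ℝ (Fin d),
      AEStronglyMeasurable (fun y => K (c - y)) volume := by
    intro c
    have : (fun y : EuclideanSpace ℝ (Fin d) => K (c - y))
        = r' ∘ (fun y => ‖c - y‖) := by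
      funext y; exact hK' _
    rw [this]
    exact (hr'anti.measurable.comp
      ((continuous_const.sub continuous_id).norm.measurable)).aestronglyMeasurable
  have hKbdd : ∀ c z : EuclideanSpace ℝ (Fin d), ‖K (c - z)‖ ≤ M := by
    intro c z
    rw [hK]
    exact hrM _ (norm_nonneg _)
  have hint : ∀ c : EuclideanSpace ℝ (Fin d),
      Integrable (fun y => K (c - y) * ρ y) volume := by
    intro c
    exact hρint.bdd_mul (hKmeas c) (Filter.Eventually.of_forall fun z => hKbdd c z)
  refine integral_mono (hint _) (hint _) ?_
  intro y
  by_cases hy : y ∈ Ω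
  · have hinner : 0 ≤ ⟪x - y, n⟫ := by
      have h := hsupp y hy
      rw [inner_sub_left] at h ⊢
      linarith
    have hnorm : ‖x - y‖ ≤ ‖x + s • n - y‖ := by
      have heq : x + s • n - y = (x - y) + s • n := by abel
      rw [heq]
      have hsq : ‖(x - y) + s • n‖ ^ 2 = ‖x - y‖ ^ 2 + 2 * (s * ⟪x - y, n⟫) + (s * ‖n‖) ^ 2 := by
        rw [norm_add_sq_real, real_inner_smul_right, norm_smul, Real.norm_eq_abs,
          abs_of_nonneg hs]
        try ring
      nlinarith [norm_nonneg ((x - y) + s • n), norm_nonneg (x - y), norm_nonneg n,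
        mul_nonneg hs hinner]
    have hKle : K (x + s • n - y) ≤ K (x - y) := by
      rw [hK, hK]
      exact hr (norm_nonneg _) (norm_nonneg _) hnorm
    exact mul_le_mul_of_nonneg_right hKle (hρpos y)
  · simp [hρsupp y hy]
end

section
/- Let Ω ⊂ ℝ^d be a convex set, let x ∈ ℝ^d and let n be a unit vector such that ⟨y − x, n⟩ ≤ 0 for every y ∈ Ω. Let r : [0,∞) → ℝ be nonincreasing, let K : ℝ^d → ℝ be defined by K(z) = r(‖z‖), and assume K is continuously differentiable with bounded derivative. Let ρ : ℝ^d → ℝ be integrable, nonnegative, and equal to zero outside Ω. Then the directional derivative of the convolution K*ρ at x in the direction n is nonpositive: ⟨∇(K*ρ)(x), n⟩ ≤ 0. -/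
open MeasureTheory
open scoped RealInnerProductSpace

/-- For a C¹ radial nonincreasing kernel `K` with bounded derivative and a
nonnegative integrable density `ρ` supported in a convex set `Ω`, the directional
derivative of the convolution `K * ρ` at `x` in an outward normal direction `n`
(`⟪y - x, n⟫ ≤ 0` for all `y ∈ Ω`) is nonpositive. -/
theorem stmt1 {d : ℕ} (Ω : Set (EuclideanSpace ℝ (Fin d)))
    (hΩ : Convex ℝ Ω)
    (x n : EuclideanSpace ℝ (Fin d)) (hn : ‖n‖ = 1)
    (hsupp : ∀ y ∈ Ω, ⟪y - x, n⟫ ≤ 0)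
    (r : ℝ → ℝ) (hr : AntitoneOn r (Set.Ici 0))
    (K : EuclideanSpace ℝ (Fin d) → ℝ) (hK : ∀ z, K z = r ‖z‖)
    (hKdiff : ContDiff ℝ 1 K)
    (M : ℝ) (hKM : ∀ z, ‖fderiv ℝ K z‖ ≤ M)
    (ρ : EuclideanSpace ℝ (Fin d) → ℝ)
    (hρint : Integrable ρ) (hρpos : ∀ y, 0 ≤ ρ y)
    (hρsupp : ∀ y ∉ Ω, ρ y = 0) :
    ⟪gradient (fun z => ∫ y, K (z - y) * ρ y) x, n⟫ ≤ 0 := by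
  classical
  have hKd : Differentiable ℝ K := hKdiff.differentiable one_ne_zero
  have hM : 0 ≤ M := le_trans (norm_nonneg _) (hKM 0)
  -- pointwise key fact
  have key : ∀ z : EuclideanSpace ℝ (Fin d), 0 ≤ ⟪z, n⟫ → fderiv ℝ K z n ≤ 0 := by
    intro z hz
    have h1 : HasDerivAt (fun t : ℝ => z + t • n) n 0 := by
      simpa using ((hasDerivAt_id (0 : ℝ)).smul_const n).const_add z
    have hd : HasDerivAt (fun t : ℝ => K (z + t • n)) (fderiv ℝ K z n) 0 := by
      have hd := (hKd (z + (0:ℝ) • n)).hasFDerivAt.comp_hasDerivAt 0 h1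
      simpa [Function.comp_def] using hd
    have hle : ∀ t : ℝ, 0 < t → K (z + t • n) ≤ K z := by
      intro t ht
      have hnorm : ‖z‖ ≤ ‖z + t • n‖ := by
        have hsq : ‖z‖ ^ 2 ≤ ‖z + t • n‖ ^ 2 := by
          have : ⟪z, t • n⟫ = t * ⟪z, n⟫ := real_inner_smul_right z n t
          nlinarith [norm_add_sq_real z (t • n), norm_nonneg (t • n),
            mul_nonneg ht.le hz, sq_nonneg ‖t • n‖]
        nlinarith [norm_nonneg z, norm_nonneg (z + t • n)]
      rw [hK, hK]
      exact hr (Set.mem_Ici.mpr (norm_nonneg _)) (Set.mem_Ici.mpr (norm_nonneg _)) hnorm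
    -- derivative from the right is ≤ 0
    have hslope : Filter.Tendsto (slope (fun t : ℝ => K (z + t • n)) 0) (nhdsWithin 0 (Set.Ioi 0))
        (nhds (fderiv ℝ K z n)) :=
      (hasDerivAt_iff_tendsto_slope.mp hd).mono_left
        (nhdsWithin_mono 0 (by intro t ht; exact ne_of_gt ht))
    refine le_of_tendsto hslope ?_
    filter_upwards [self_mem_nhdsWithin] with t ht
    have ht' : (0:ℝ) < t := ht
    rw [slope_def_field]
    have : K (z + t • n) - K (z + (0:ℝ) • n) ≤ 0 := by
      simpa using sub_nonpos.mpr (hle t ht')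
    have h0 : K (z + (0:ℝ) • n) = K z := by simp
    rw [div_eq_inv_mul]
    have : (K (z + t • n) - K (z + (0:ℝ) • n)) / (t - 0) ≤ 0 := by
      apply div_nonpos_of_nonpos_of_nonneg this (by linarith)
    simpa [div_eq_inv_mul] using this
  -- Lipschitz estimate for K
  have hlip : ∀ a b : EuclideanSpace ℝ (Fin d), ‖K b - K a‖ ≤ M * ‖b - a‖ := by
    intro a b
    exact (convex_univ : Convex ℝ (Set.univ : Set (EuclideanSpace ℝ (Fin d)))).norm_image_sub_le_of_norm_fderiv_le
      (fun w _ => hKd w) (fun w _ => hKM w) trivial trivial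
  -- measurability helpers
  have hKcont : Continuous K := hKdiff.continuous
  have hFmeas : ∀ z : EuclideanSpace ℝ (Fin d),
      AEStronglyMeasurable (fun y => K (z - y) * ρ y) volume :=
    fun z => ((hKcont.comp (continuous_const.sub continuous_id)).aestronglyMeasurable).mul
      hρint.aestronglyMeasurable
  by_cases hInt : Integrable (fun y => K (x - y) * ρ y) volume
  · -- differentiable case
    set F' : EuclideanSpace ℝ (Fin d) → EuclideanSpace ℝ (Fin d) →
        (EuclideanSpace ℝ (Fin d) →L[ℝ] ℝ) := fun z y => ρ y • fderiv ℝ K (z - y) with hF'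
    have hF'cont : Continuous (fun y => fderiv ℝ K (x - y)) :=
      (hKdiff.continuous_fderiv one_ne_zero).comp (continuous_const.sub continuous_id)
    have hF'meas : AEStronglyMeasurable (F' x) volume :=
      hρint.aestronglyMeasurable.smul hF'cont.aestronglyMeasurable
    have hF'deriv : ∀ y z, HasFDerivAt (fun w => K (w - y) * ρ y) (F' z y) z := by
      intro y z
      have h1 : HasFDerivAt (fun w : EuclideanSpace ℝ (Fin d) => w - y)
          (ContinuousLinearMap.id ℝ _) z := (hasFDerivAt_id z).sub_const y
      have h2 : HasFDerivAt (fun w => K (w - y)) (fderiv ℝ K (z - y)) z := by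
        have := (hKd (z - y)).hasFDerivAt.comp z h1
        simpa [Function.comp_def] using this
      simpa [hF'] using h2.mul_const (ρ y)
    have hbound : ∀ᵐ y ∂(volume : Measure (EuclideanSpace ℝ (Fin d))),
        ∀ z ∈ Metric.ball x 1, ‖F' z y‖ ≤ M * ρ y := by
      filter_upwards with y z _
      rw [hF']
      calc ‖ρ y • fderiv ℝ K (z - y)‖ = |ρ y| * ‖fderiv ℝ K (z - y)‖ := by
            simp [norm_smul]
        _ ≤ M * ρ y := by
            rw [abs_of_nonneg (hρpos y)]
            rw [mul_comm]
            exact mul_le_mul_of_nonneg_right (hKM _) (hρpos y)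
    have hmain : HasFDerivAt (fun z => ∫ y, K (z - y) * ρ y)
        (∫ y, F' x y) x := by
      apply hasFDerivAt_integral_of_dominated_of_fderiv_le (s := Metric.ball x 1) (Metric.ball_mem_nhds x one_pos)
      · filter_upwards with z; exact hFmeas z
      · exact hInt
      · exact hF'meas
      · exact hbound
      · exact hρint.const_mul M
      · filter_upwards with y z _; exact hF'deriv y z
    have hF'int : Integrable (F' x) volume := by
      refine Integrable.mono' (hρint.const_mul M) hF'meas ?_
      filter_upwards with y
      rw [hF']
      calc ‖ρ y • fderiv ℝ K (x - y)‖ = |ρ y| * ‖fderiv ℝ K (x - y)‖ := by simp [norm_smul]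
        _ ≤ M * ρ y := by
            rw [abs_of_nonneg (hρpos y), mul_comm]
            exact mul_le_mul_of_nonneg_right (hKM _) (hρpos y)
    have hgrad : ⟪gradient (fun z => ∫ y, K (z - y) * ρ y) x, n⟫
        = (∫ y, F' x y) n := by
      rw [gradient, hmain.fderiv]
      exact InnerProductSpace.toDual_symm_apply
    rw [hgrad, ContinuousLinearMap.integral_apply hF'int n]
    apply integral_nonpos
    intro y
    simp only [hF', ContinuousLinearMap.smul_apply, smul_eq_mul]
    by_cases hy : y ∈ Ω
    · have h1 : 0 ≤ ⟪x - y, n⟫ := by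
        have := hsupp y hy
        have : ⟪x - y, n⟫ = -⟪y - x, n⟫ := by
          rw [← inner_neg_left]; congr 1; abel
        linarith [hsupp y hy, this]
      exact mul_nonpos_of_nonneg_of_nonpos (hρpos y) (key _ h1)
    · simp [hρsupp y hy]
  · -- non-integrable case: the function is identically zero
    have hall : ∀ z : EuclideanSpace ℝ (Fin d),
        ¬ Integrable (fun y => K (z - y) * ρ y) volume := by
      intro z hz
      apply hInt
      have hdiff : Integrable (fun y => (K (x - y) - K (z - y)) * ρ y) volume := by
        refine Integrable.mono' (hρint.const_mul (M * ‖x - z‖))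
          (((hKcont.comp (continuous_const.sub continuous_id)).sub
            (hKcont.comp (continuous_const.sub continuous_id))).aestronglyMeasurable.mul
            hρint.aestronglyMeasurable) ?_
        filter_upwards with y
        rw [Real.norm_eq_abs, abs_mul, abs_of_nonneg (hρpos y)]
        have h1 : |K (x - y) - K (z - y)| ≤ M * ‖x - z‖ := by
          have := hlip (z - y) (x - y)
          rw [Real.norm_eq_abs] at this
          have he : (x - y) - (z - y) = x - z := by abel
          rw [he] at this
          exact this
        exact mul_le_mul_of_nonneg_right h1 (hρpos y)
      exact (hz.add hdiff).congr (Filter.Eventually.of_forall fun y => by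
        simp only [Pi.add_apply]; ring)
    have hzero : (fun z : EuclideanSpace ℝ (Fin d) => ∫ y, K (z - y) * ρ y)
        = fun _ => (0:ℝ) := by
      funext z; exact integral_undef (hall z)
    rw [hzero, gradient_fun_const]
    simp
end

section
/- Let f : ℝ → ℝ be monotonically nondecreasing and Lipschitz-continuous with Lipschitz constant L ≥ 0. Let a₀ ∈ ℝ^d, let t₁, …, t_d be nonzero real numbers, and set a_i = a₀ + t_i·e_i for i = 1, …, d, where e₁, …, e_d is the standard orthonormal basis of ℝ^d. Let u, w : ℝ^d → ℝ be affine maps such that w(a_i) = f(u(a_i)) for all i = 0, 1, …, d. Then, denoting by ∇u and ∇w the (constant) gradient vectors of u and w, one has ‖∇w‖² ≤ L · ⟨∇u, ∇w⟩. -/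
open scoped RealInnerProductSpace

/-- Discrete chain-rule inequality on a right simplex with legs along the
coordinate axes: if `f` is nondecreasing and `L`-Lipschitz, `u, w` are affine maps
(with constant gradient vectors `gu, gw`) such that `w = f ∘ u` at the vertices
`a₀, a₀ + tᵢ • eᵢ`, then `‖∇w‖² ≤ L * ⟪∇u, ∇w⟫`. -/
theorem stmt3 {d : ℕ} (f : ℝ → ℝ) (L : ℝ) (hL : 0 ≤ L)
    (hmono : Monotone f)
    (hlip : ∀ x y : ℝ, |f x - f y| ≤ L * |x - y|)
    (a₀ : EuclideanSpace ℝ (Fin d)) (t : Fin d → ℝ) (ht : ∀ i, t i ≠ 0)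
    (gu gw : EuclideanSpace ℝ (Fin d)) (cu cw : ℝ)
    (u w : EuclideanSpace ℝ (Fin d) → ℝ)
    (hu : ∀ z, u z = ⟪gu, z⟫ + cu) (hw : ∀ z, w z = ⟪gw, z⟫ + cw)
    (h0 : w a₀ = f (u a₀))
    (hi : ∀ i : Fin d, w (a₀ + t i • EuclideanSpace.single i 1) =
          f (u (a₀ + t i • EuclideanSpace.single i 1))) :
    ‖gw‖ ^ 2 ≤ L * ⟪gu, gw⟫ := by
  have key : ∀ s h : ℝ, (f (s + h) - f s) ^ 2 ≤ L * (h * (f (s + h) - f s)) := by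
    intro s h
    set Δ := f (s + h) - f s with hΔ
    have hsign : 0 ≤ h * Δ := by
      rcases le_or_gt 0 h with hp | hn
      · exact mul_nonneg hp (sub_nonneg.2 (hmono (by linarith)))
      · exact mul_nonneg_iff.2 (Or.inr ⟨hn.le, sub_nonpos.2 (hmono (by linarith))⟩)
    have habs : |Δ| ≤ L * |h| := by
      have := hlip (s + h) s
      simpa [hΔ] using this
    have hprod : |h| * |Δ| = h * Δ := by rw [← abs_mul, abs_of_nonneg hsign]
    nlinarith [sq_abs Δ, abs_nonneg Δ, abs_nonneg h]
  -- vertex identities give the componentwise formula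
  have hcomp : ∀ i : Fin d, t i * gw i = f (u a₀ + t i * gu i) - f (u a₀) := by
    intro i
    have h1 := hi i
    have hu' : u (a₀ + t i • EuclideanSpace.single i 1) = u a₀ + t i * gu i := by
      rw [hu, hu, inner_add_right, inner_smul_right, EuclideanSpace.inner_single_right]
      simp [mul_comm]
      ring
    have hw' : w (a₀ + t i • EuclideanSpace.single i 1) = w a₀ + t i * gw i := by
      rw [hw, hw, inner_add_right, inner_smul_right, EuclideanSpace.inner_single_right]
      simp [mul_comm]
      ring
    rw [hw', hu', h0] at h1
    linarith
  have hpt : ∀ i : Fin d, gw i ^ 2 ≤ L * (gu i * gw i) := by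
    intro i
    have hk := key (u a₀) (t i * gu i)
    rw [← hcomp i] at hk
    have htsq : 0 < t i ^ 2 := pow_pos (abs_pos.2 (ht i)) 2 |>.trans_eq (sq_abs (t i)) |>.trans_le le_rfl
    nlinarith [sq_nonneg (t i), hk]
  have hnorm : ‖gw‖ ^ 2 = ∑ i, gw i ^ 2 := by
    rw [← real_inner_self_eq_norm_sq]
    simp [PiLp.inner_apply, sq]
    rw [EuclideanSpace.norm_eq, ← sq, Real.sq_sqrt (by positivity)]
    simp [sq]
  have hinner : ⟪gu, gw⟫ = ∑ i, gu i * gw i := by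
    simp [PiLp.inner_apply]
    exact Finset.sum_congr rfl fun i _ => mul_comm _ _
  rw [hnorm, hinner, Finset.mul_sum]
  exact Finset.sum_le_sum fun i _ => hpt i
end

section
/- Let E ⊂ ℝ^d be a d-simplex with vertices a_0, …, a_d (affinely independent points) and let f : ℝ^d → ℝ be an affine map. Then (|E| / ((d+1)(d+2))) · Σ_{i=0}^{d} f(a_i)² ≤ ∫_E f(x)² dx ≤ (|E| / (d+1)) · Σ_{i=0}^{d} f(a_i)², where |E| denotes the Lebesgue measure of E. -/
open MeasureTheory
open scoped RealInnerProductSpace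

open Set
open scoped Pointwise

namespace Stmt12Aux

/-- corner simplex -/
def S (n : ℕ) : Set (Fin n → ℝ) := {y | (∀ i, 0 ≤ y i) ∧ ∑ i, y i ≤ 1}

lemma isClosed_S (n : ℕ) : IsClosed (S n) := by
  have h1 : IsClosed {y : Fin n → ℝ | ∀ i, 0 ≤ y i} := by
    have : {y : Fin n → ℝ | ∀ i, 0 ≤ y i} = ⋂ i, {y | 0 ≤ y i} := by
      ext y; simp
    rw [this]
    exact isClosed_iInter fun i => isClosed_le continuous_const (continuous_apply i)
  have h2 : IsClosed {y : Fin n → ℝ | ∑ i, y i ≤ 1} :=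
    isClosed_le (by continuity) continuous_const
  exact (h1.inter h2 : _)

lemma isCompact_S (n : ℕ) : IsCompact (S n) := by
  refine IsCompact.of_isClosed_subset (isCompact_univ_pi fun _ => isCompact_Icc (a := (0:ℝ)) (b := 1)) (isClosed_S n) ?_
  intro y hy
  refine Set.mem_univ_pi.2 fun i => ⟨hy.1 i, ?_⟩
  calc y i ≤ ∑ j, y j := Finset.single_le_sum (fun j _ => hy.1 j) (Finset.mem_univ i)
  _ ≤ 1 := hy.2

lemma measurableSet_S (n : ℕ) : MeasurableSet (S n) := (isClosed_S n).measurableSet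

lemma convex_S (n : ℕ) : Convex ℝ (S n) := by
  have h1 : Convex ℝ {y : Fin n → ℝ | ∀ i, 0 ≤ y i} := by
    have : {y : Fin n → ℝ | ∀ i, 0 ≤ y i} = ⋂ i, {y | 0 ≤ y i} := by ext y; simp
    rw [this]
    exact convex_iInter fun i => convex_halfSpace_ge (LinearMap.isLinear (LinearMap.proj i)) 0
  have h2 : Convex ℝ {y : Fin n → ℝ | ∑ i, y i ≤ 1} := by
    refine convex_halfSpace_le (f := fun y : Fin n → ℝ => ∑ i, y i) ?_ 1
    constructor
    · intro x y; simp [Finset.sum_add_distrib]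
    · intro c x; simp [Finset.mul_sum]
  exact h1.inter h2

lemma integrableOn_S {n : ℕ} {F : (Fin n → ℝ) → ℝ} (hF : Continuous F) :
    IntegrableOn F (S n) volume :=
  hF.continuousOn.integrableOn_compact (isCompact_S n)



lemma J0 (m : ℕ) : ∫ t in (0:ℝ)..1, (1-t)^m = 1/((m:ℝ)+1) := by
  have h := intervalIntegral.integral_comp_sub_left (a := (0:ℝ)) (b := 1) (fun s => s ^ m) 1
  simp only [sub_self, sub_zero] at h
  rw [h, integral_pow]
  simp

lemma J1 (m : ℕ) : ∫ t in (0:ℝ)..1, t * (1-t)^m = 1/((m:ℝ)+1) - 1/((m:ℝ)+2) := by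
  have h := intervalIntegral.integral_comp_sub_left (a := (0:ℝ)) (b := 1)
    (fun s => (1 - s) * s ^ m) 1
  simp only [sub_self, sub_zero, sub_sub_cancel] at h
  rw [h]
  have : ∀ s : ℝ, (1 - s) * s ^ m = s ^ m - s ^ (m+1) := by intro s; ring
  simp_rw [this]
  rw [intervalIntegral.integral_sub ((by continuity : Continuous _).intervalIntegrable _ _) ((by continuity : Continuous _).intervalIntegrable _ _), integral_pow, integral_pow]
  push_cast; ring

lemma J2 (m : ℕ) : ∫ t in (0:ℝ)..1, t^2 * (1-t)^m = 1/((m:ℝ)+1) - 2/((m:ℝ)+2) + 1/((m:ℝ)+3) := by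
  have h := intervalIntegral.integral_comp_sub_left (a := (0:ℝ)) (b := 1)
    (fun s => (1 - s)^2 * s ^ m) 1
  simp only [sub_self, sub_zero, sub_sub_cancel] at h
  rw [h]
  have : ∀ s : ℝ, (1 - s)^2 * s ^ m = s ^ m - 2 * s ^ (m+1) + s ^ (m+2) := by intro s; ring
  simp_rw [this]
  rw [intervalIntegral.integral_add ((by continuity : Continuous _).intervalIntegrable _ _) ((by continuity : Continuous _).intervalIntegrable _ _),
    intervalIntegral.integral_sub ((by continuity : Continuous _).intervalIntegrable _ _) ((by continuity : Continuous _).intervalIntegrable _ _),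
    intervalIntegral.integral_const_mul, integral_pow, integral_pow, integral_pow]
  push_cast; ring

lemma beta (m : ℕ) (α β : ℝ) :
    ∫ t in (0:ℝ)..1, (1-t)^m * (α*(1-t)+β*t)^2 =
      (((m:ℝ)+2)*((m:ℝ)+1)*α^2 + 2*((m:ℝ)+1)*α*β + 2*β^2) / (((m:ℝ)+1)*((m:ℝ)+2)*((m:ℝ)+3)) := by
  have : ∀ t : ℝ, (1-t)^m * (α*(1-t)+β*t)^2 =
      α^2 * (1-t)^(m+2) + (2*α*β) * (t * (1-t)^(m+1)) + β^2 * (t^2 * (1-t)^m) := by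
    intro t; ring
  simp_rw [this]
  rw [intervalIntegral.integral_add ((by continuity : Continuous _).intervalIntegrable _ _) ((by continuity : Continuous _).intervalIntegrable _ _),
    intervalIntegral.integral_add ((by continuity : Continuous _).intervalIntegrable _ _) ((by continuity : Continuous _).intervalIntegrable _ _),
    intervalIntegral.integral_const_mul, intervalIntegral.integral_const_mul,
    intervalIntegral.integral_const_mul, J0, J1, J2]
  have h1 : (m:ℝ)+1 ≠ 0 := by positivity
  have h2 : (m:ℝ)+2 ≠ 0 := by positivity
  have h3 : (m:ℝ)+3 ≠ 0 := by positivity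
  push_cast
  field_simp
  ring

lemma smul_set_S {n : ℕ} {s : ℝ} (hs : 0 < s) :
    {z : Fin n → ℝ | (∀ j, 0 ≤ z j) ∧ ∑ j, z j ≤ s} = s • S n := by
  ext z
  rw [Set.mem_smul_set_iff_inv_smul_mem₀ hs.ne']
  simp only [S, mem_setOf_eq, Pi.smul_apply, smul_eq_mul]
  constructor
  · rintro ⟨h1, h2⟩
    refine ⟨fun j => mul_nonneg (inv_pos.2 hs).le (h1 j), ?_⟩
    rw [← Finset.mul_sum, inv_mul_le_iff₀ hs, mul_one]
    exact h2
  · rintro ⟨h1, h2⟩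
    have h1' : ∀ j, 0 ≤ z j := by
      intro j
      have := h1 j
      have := (mul_nonneg_iff_of_pos_left (inv_pos.2 hs)).1 this
      exact this
    refine ⟨h1', ?_⟩
    rw [← Finset.mul_sum, inv_mul_le_iff₀ hs, mul_one] at h2
    exact h2

theorem integral_sq_S : ∀ (n : ℕ) (c : ℝ) (b : Fin n → ℝ),
    ∫ y in S n, (c + ∑ i, b i * y i)^2 =
      (c^2 + ∑ i, (c + b i)^2 + (((n:ℝ)+1)*c + ∑ i, b i)^2) / (Nat.factorial (n+2)) := by
  intro n
  induction n with
  | zero =>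
    intro c b
    have hS : S 0 = Set.univ := by
      ext y; simp [S]
    have hvol : volume (univ : Set (Fin 0 → ℝ)) = 1 := by
      rw [← Set.pi_univ univ, volume_pi_pi]
      simp
    rw [hS, setIntegral_univ]
    simp only [Finset.univ_eq_empty, Finset.sum_empty, add_zero]
    rw [integral_const, measureReal_def, hvol]
    norm_num [Nat.factorial]
  | succ n IH =>
    intro c b
    set e := MeasurableEquiv.piFinSuccAbove (fun _ : Fin (n+1) => ℝ) 0 with he
    have mp : MeasurePreserving e volume volume :=
      volume_preserving_piFinSuccAbove (fun _ : Fin (n+1) => ℝ) 0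
    set F : (Fin (n+1) → ℝ) → ℝ := fun y => (c + ∑ i, b i * y i)^2 with hF
    have hFc : Continuous F := by fun_prop
    have hesymm : ∀ p : ℝ × (Fin n → ℝ), e.symm p = Fin.insertNth 0 p.1 p.2 := by
      intro p
      simp [he, MeasurableEquiv.piFinSuccAbove_symm_apply, Fin.insertNthEquiv]
    have hins_cont : Continuous (fun p : ℝ × (Fin n → ℝ) =>
        (Fin.insertNth 0 p.1 p.2 : Fin (n+1) → ℝ)) := by
      refine continuous_pi fun i => ?_
      refine Fin.cases ?_ ?_ i
      · simp only [Fin.insertNth_apply_same]; exact continuous_fst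
      · intro j
        simp only [← Fin.succAbove_zero, Fin.insertNth_apply_succAbove]
        exact (continuous_apply j).comp continuous_snd
    have hesymm_cont : Continuous (⇑e.symm) := by
      have : ⇑e.symm = fun p : ℝ × (Fin n → ℝ) => Fin.insertNth 0 p.1 p.2 := funext hesymm
      rw [this]; exact hins_cont
    have he_cont : Continuous (⇑e) := by
      have : ⇑e = fun y : Fin (n+1) → ℝ => (y 0, fun j => y (Fin.succAbove 0 j)) := rfl
      rw [this]; fun_prop
    have hmem : ∀ (t : ℝ) (z : Fin n → ℝ),
        (Fin.insertNth 0 t z ∈ S (n+1)) ↔ ((0 ≤ t ∧ ∀ j, 0 ≤ z j) ∧ t + ∑ j, z j ≤ 1) := by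
      intro t z
      simp only [S, mem_setOf_eq]
      rw [Fin.forall_iff_succAbove (0 : Fin (n+1)),
        Fin.sum_univ_succAbove (fun i => Fin.insertNth (α := fun _ : Fin (n+1) => ℝ) 0 t z i) 0]
      simp only [Fin.insertNth_apply_same, Fin.insertNth_apply_succAbove]
    have hval : ∀ (t : ℝ) (z : Fin n → ℝ),
        F (Fin.insertNth 0 t z) = ((c + b 0 * t) + ∑ j, b (Fin.succ j) * z j)^2 := by
      intro t z
      simp only [hF]
      rw [Fin.sum_univ_succAbove (fun i => b i * Fin.insertNth (α := fun _ : Fin (n+1) => ℝ) 0 t z i) 0]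
      simp only [Fin.insertNth_apply_same, Fin.insertNth_apply_succAbove]
      simp only [Fin.succAbove_zero]
      ring
    -- step 1 : transfer to the product space
    have step1 : ∫ y in S (n+1), F y =
        ∫ p : ℝ × (Fin n → ℝ), Set.indicator (S (n+1)) F (e.symm p) := by
      rw [← integral_indicator (measurableSet_S _)]
      exact ((mp.symm e).integral_comp e.symm.measurableEmbedding _).symm
    -- integrability on the product
    have hG : (fun p : ℝ × (Fin n → ℝ) => Set.indicator (S (n+1)) F (e.symm p))
        = Set.indicator (⇑e.symm ⁻¹' (S (n+1))) (fun p => F (e.symm p)) := by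
      ext p
      by_cases h : e.symm p ∈ S (n+1)
      · rw [Set.indicator_of_mem h, Set.indicator_of_mem (by exact h)]
      · rw [Set.indicator_of_notMem h, Set.indicator_of_notMem (by exact h)]
    have hS'c : IsCompact (⇑e.symm ⁻¹' (S (n+1))) := by
      rw [← MeasurableEquiv.image_eq_preimage_symm]
      exact (isCompact_S _).image he_cont
    have hInt : Integrable (fun p : ℝ × (Fin n → ℝ) =>
        Set.indicator (S (n+1)) F (e.symm p)) volume := by
      rw [hG]
      rw [integrable_indicator_iff (e.symm.measurable (measurableSet_S _))]
      exact (hFc.comp hesymm_cont).continuousOn.integrableOn_compact hS'c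
    -- step 2 : Fubini
    have step2 : ∫ p : ℝ × (Fin n → ℝ), Set.indicator (S (n+1)) F (e.symm p) =
        ∫ t : ℝ, ∫ z : Fin n → ℝ, Set.indicator (S (n+1)) F (e.symm (t, z)) := by
      rw [show (volume : Measure (ℝ × (Fin n → ℝ))) = volume.prod volume from
        Measure.volume_eq_prod ℝ (Fin n → ℝ)] at hInt ⊢
      exact integral_prod _ hInt
    -- the explicit outer integrand
    set ψ : ℝ → ℝ := Set.indicator (Icc (0:ℝ) 1) (fun t =>
      (1-t)^n • (((c + b 0 * t)^2 + ∑ j, (c + b 0 * t + (1-t) * b (Fin.succ j))^2 +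
        (((n:ℝ)+1)*(c + b 0 * t) + ∑ j, (1-t) * b (Fin.succ j))^2) / (Nat.factorial (n+2))))
      with hψ
    have key : ∀ t : ℝ, t ≠ 1 →
        (∫ z : Fin n → ℝ, Set.indicator (S (n+1)) F (e.symm (t, z))) = ψ t := by
      intro t ht
      classical
      have hrw : (fun z : Fin n → ℝ => Set.indicator (S (n+1)) F (e.symm (t, z)))
          = Set.indicator {z : Fin n → ℝ | (0 ≤ t ∧ ∀ j, 0 ≤ z j) ∧ t + ∑ j, z j ≤ 1}
            (fun z => F (Fin.insertNth 0 t z)) := by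
        funext z
        rw [hesymm (t, z)]
        simp only [Set.indicator_apply, mem_setOf_eq]
        rw [if_congr (hmem t z) rfl rfl]
      rw [hrw]
      by_cases h0 : 0 ≤ t
      · by_cases h1 : t ≤ 1
        · have htlt : t < 1 := lt_of_le_of_ne h1 ht
          have hspos : 0 < 1 - t := by linarith
          have hsets : {z : Fin n → ℝ | (0 ≤ t ∧ ∀ j, 0 ≤ z j) ∧ t + ∑ j, z j ≤ 1}
              = (1-t) • S n := by
            rw [← smul_set_S hspos]
            ext z
            simp only [mem_setOf_eq, h0, true_and]
            constructor
            · rintro ⟨hz, hsum⟩; exact ⟨hz, by linarith⟩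
            · rintro ⟨hz, hsum⟩; exact ⟨hz, by linarith⟩
          rw [hsets, integral_indicator (by
            rw [← smul_set_S hspos, show {z : Fin n → ℝ | (∀ j, 0 ≤ z j) ∧ ∑ j, z j ≤ 1-t}
              = (⋂ j, {z : Fin n → ℝ | 0 ≤ z j}) ∩ {z | ∑ j, z j ≤ 1-t} by ext z; simp]
            exact MeasurableSet.inter
              (MeasurableSet.iInter fun j =>
                measurableSet_le measurable_const (measurable_pi_apply j))
              (measurableSet_le (by fun_prop) measurable_const))]
          have hcs := MeasureTheory.Measure.setIntegral_comp_smul_of_pos volume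
            (fun z : Fin n → ℝ => F (Fin.insertNth 0 t z)) (S n) hspos
          rw [Module.finrank_fin_fun] at hcs
          have hX : ∫ z in (1-t) • S n, F (Fin.insertNth 0 t z)
              = (1-t)^n • ∫ x in S n, F (Fin.insertNth 0 t ((1-t) • x)) := by
            rw [hcs, smul_smul, mul_inv_cancel₀ (by positivity), one_smul]
          rw [hX]
          have hintg : ∀ x : Fin n → ℝ, F (Fin.insertNth 0 t ((1-t) • x))
              = ((c + b 0 * t) + ∑ j, ((1-t) * b (Fin.succ j)) * x j)^2 := by
            intro x
            rw [hval]
            congr 2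
            refine Finset.sum_congr rfl fun j _ => ?_
            simp only [Pi.smul_apply, smul_eq_mul]
            ring
          simp_rw [hintg]
          rw [IH (c + b 0 * t) (fun j => (1-t) * b (Fin.succ j))]
          rw [hψ, Set.indicator_of_mem (show t ∈ Icc (0:ℝ) 1 from ⟨h0, h1⟩)]
        · have hempty : {z : Fin n → ℝ | (0 ≤ t ∧ ∀ j, 0 ≤ z j) ∧ t + ∑ j, z j ≤ 1} = ∅ := by
            ext z
            simp only [mem_setOf_eq, mem_empty_iff_false, iff_false, not_and]
            rintro ⟨-, hz⟩
            have h2 : 0 ≤ ∑ j, z j := Finset.sum_nonneg fun j _ => hz j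
            have := not_le.1 h1
            intro hc; linarith
          rw [hempty]
          simp only [Set.indicator_empty, integral_zero]
          rw [hψ, Set.indicator_of_notMem (show t ∉ Icc (0:ℝ) 1 by
            simp only [mem_Icc, not_and]; intro; linarith [not_le.1 h1])]
      · have hempty : {z : Fin n → ℝ | (0 ≤ t ∧ ∀ j, 0 ≤ z j) ∧ t + ∑ j, z j ≤ 1} = ∅ := by
          ext z
          simp only [mem_setOf_eq, mem_empty_iff_false, iff_false, not_and]
          rintro ⟨hc, -⟩
          exact absurd hc h0
        rw [hempty]
        simp only [Set.indicator_empty, integral_zero]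
        rw [hψ, Set.indicator_of_notMem (show t ∉ Icc (0:ℝ) 1 by
          simp only [mem_Icc, not_and]; intro hc; exact absurd hc h0)]
    have haefin : (fun t => ∫ z : Fin n → ℝ, Set.indicator (S (n+1)) F (e.symm (t, z)))
        =ᵐ[volume] ψ := by
      have h1 : ∀ᵐ t : ℝ, t ≠ 1 := by
        rw [MeasureTheory.ae_iff]
        simpa using Real.volume_singleton (a := 1)
      filter_upwards [h1] with t ht using key t ht
    rw [step1, step2, integral_congr_ae haefin, hψ, integral_indicator measurableSet_Icc,
      MeasureTheory.integral_Icc_eq_integral_Ioc,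
      ← intervalIntegral.integral_of_le (by norm_num : (0:ℝ) ≤ 1)]
    -- now an explicit interval integral
    have hbody : ∀ t : ℝ, (1-t)^n • (((c + b 0 * t)^2 +
          ∑ j, (c + b 0 * t + (1-t) * b (Fin.succ j))^2 +
          (((n:ℝ)+1)*(c + b 0 * t) + ∑ j, (1-t) * b (Fin.succ j))^2) / (Nat.factorial (n+2)))
        = ((1-t)^n * (c*(1-t) + (c + b 0)*t)^2
          + ∑ j, (1-t)^n * ((c + b (Fin.succ j))*(1-t) + (c + b 0)*t)^2
          + (1-t)^n * ((((n:ℝ)+1)*c + ∑ j, b (Fin.succ j))*(1-t)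
              + (((n:ℝ)+1)*(c + b 0))*t)^2) / (Nat.factorial (n+2)) := by
      intro t
      rw [smul_eq_mul]
      rw [show ∑ j, (c + b 0 * t + (1-t) * b (Fin.succ j))^2
          = ∑ j, ((c + b (Fin.succ j))*(1-t) + (c + b 0)*t)^2 from
        Finset.sum_congr rfl fun j _ => by ring]
      rw [show (∑ j, (1-t) * b (Fin.succ j)) = (1-t) * ∑ j, b (Fin.succ j) from
        (Finset.mul_sum _ _ _).symm]
      rw [show ∑ j, (1-t)^n * ((c + b (Fin.succ j))*(1-t) + (c + b 0)*t)^2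
          = (1-t)^n * ∑ j, ((c + b (Fin.succ j))*(1-t) + (c + b 0)*t)^2 from
        (Finset.mul_sum _ _ _).symm]
      ring
    simp_rw [hbody]
    have cont1 : Continuous fun t : ℝ => (1-t)^n * (c*(1-t) + (c + b 0)*t)^2 := by fun_prop
    have cont2 : Continuous fun t : ℝ =>
        ∑ j : Fin n, (1-t)^n * ((c + b (Fin.succ j))*(1-t) + (c + b 0)*t)^2 :=
      continuous_finset_sum _ fun j _ => by fun_prop
    have cont3 : Continuous fun t : ℝ => (1-t)^n * ((((n:ℝ)+1)*c + ∑ j, b (Fin.succ j))*(1-t)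
        + (((n:ℝ)+1)*(c + b 0))*t)^2 := by fun_prop
    rw [intervalIntegral.integral_div,
      intervalIntegral.integral_add (show IntervalIntegrable (fun t : ℝ => (1-t)^n * (c*(1-t) + (c + b 0)*t)^2 + ∑ j : Fin n, (1-t)^n * ((c + b (Fin.succ j))*(1-t) + (c + b 0)*t)^2) volume 0 1 from (cont1.add cont2).intervalIntegrable _ _)
        (cont3.intervalIntegrable _ _),
      intervalIntegral.integral_add (cont1.intervalIntegrable _ _)
        (cont2.intervalIntegrable _ _),
      intervalIntegral.integral_finset_sum (fun j _ =>
        Continuous.intervalIntegrable (by fun_prop) _ _)]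
    rw [beta n c (c + b 0),
      beta n (((n:ℝ)+1)*c + ∑ j, b (Fin.succ j)) (((n:ℝ)+1)*(c + b 0))]
    simp_rw [beta n _ (c + b 0)]
    have hsum1 : ∑ j : Fin n, ((((n:ℝ)+2)*((n:ℝ)+1)*(c + b (Fin.succ j))^2
          + 2*((n:ℝ)+1)*(c + b (Fin.succ j))*(c + b 0) + 2*(c + b 0)^2)
          / (((n:ℝ)+1)*((n:ℝ)+2)*((n:ℝ)+3)))
        = ((((n:ℝ)+2)*((n:ℝ)+1)) * (∑ j, (c + b (Fin.succ j))^2)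
          + (2*((n:ℝ)+1)*(c + b 0)) * ((n:ℝ)*c + ∑ j, b (Fin.succ j))
          + (n:ℝ) * (2*(c + b 0)^2)) / (((n:ℝ)+1)*((n:ℝ)+2)*((n:ℝ)+3)) := by
      rw [← Finset.sum_div]
      congr 1
      rw [Finset.sum_congr rfl (fun j _ => show _ = (((n:ℝ)+2)*((n:ℝ)+1))*(c + b (Fin.succ j))^2
          + (2*((n:ℝ)+1)*(c + b 0))*(c + b (Fin.succ j)) + 2*(c + b 0)^2 from by ring)]
      rw [Finset.sum_add_distrib, Finset.sum_add_distrib, ← Finset.mul_sum, ← Finset.mul_sum,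
        Finset.sum_const, Finset.card_univ, Fintype.card_fin, nsmul_eq_mul]
      rw [show ∑ j : Fin n, (c + b (Fin.succ j)) = (n:ℝ)*c + ∑ j, b (Fin.succ j) from by
        rw [Finset.sum_add_distrib, Finset.sum_const, Finset.card_univ, Fintype.card_fin,
          nsmul_eq_mul]]
    rw [hsum1]
    -- final algebra
    have hQ : ∑ i : Fin (n+1), (c + b i)^2 = (c + b 0)^2 + ∑ j, (c + b (Fin.succ j))^2 :=
      Fin.sum_univ_succ _
    have hB : ∑ i : Fin (n+1), b i = b 0 + ∑ j, b (Fin.succ j) := Fin.sum_univ_succ _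
    rw [hQ, hB]
    have hfac : ((Nat.factorial (n+1+2)) : ℝ) = ((n:ℝ)+3) * (Nat.factorial (n+2)) := by
      rw [show n+1+2 = (n+2)+1 from rfl, Nat.factorial_succ]
      push_cast; ring
    rw [hfac]
    have e1 : ((n:ℝ)+1) ≠ 0 := by positivity
    have e2 : ((n:ℝ)+2) ≠ 0 := by positivity
    have e3 : ((n:ℝ)+3) ≠ 0 := by positivity
    have e4 : ((Nat.factorial (n+2) : ℝ)) ≠ 0 :=
      Nat.cast_ne_zero.2 (Nat.factorial_ne_zero _)
    push_cast
    field_simp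
    ring


lemma volume_S_toReal (n : ℕ) : (volume (S n)).toReal = 1 / (Nat.factorial n) := by
  have h := integral_sq_S n 1 (fun _ => 0)
  simp only [zero_mul, Finset.sum_const_zero, add_zero, mul_one] at h
  have h2 : ∫ (_ : Fin n → ℝ) in S n, ((1:ℝ))^2 = (volume (S n)).toReal := by
    simp only [one_pow, setIntegral_const, smul_eq_mul, mul_one, measureReal_def]
  rw [h2] at h
  rw [h]
  simp only [one_pow]
  have e1 : ((1:ℝ) + ∑ _i : Fin n, (1:ℝ) + ((n:ℝ)+1)^2) = ((n:ℝ)+1)*((n:ℝ)+2) := by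
    simp [Finset.sum_const, Finset.card_univ]
    ring
  rw [e1]
  have e2 : ((Nat.factorial (n+2)) : ℝ) = ((n:ℝ)+2)*(((n:ℝ)+1)*(Nat.factorial n)) := by
    rw [show n+2 = (n+1)+1 from rfl, Nat.factorial_succ, Nat.factorial_succ]
    push_cast; ring
  rw [e2]
  have f1 : ((n:ℝ)+1) ≠ 0 := by positivity
  have f2 : ((n:ℝ)+2) ≠ 0 := by positivity
  have f3 : ((Nat.factorial n : ℝ)) ≠ 0 := Nat.cast_ne_zero.2 (Nat.factorial_ne_zero _)
  field_simp

theorem pi_version (d : ℕ) (a : Fin (d+1) → (Fin d → ℝ)) (w : Fin d → ℝ) (k : ℝ)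
    (φ : (Fin d → ℝ) → ℝ) (hφ : ∀ z, φ z = (∑ j, w j * z j) + k) :
    (∫ x in convexHull ℝ (Set.range a), φ x ^ 2) =
      (volume (convexHull ℝ (Set.range a))).toReal *
        ((∑ i, φ (a i)^2) + (∑ i, φ (a i))^2) / (((d:ℝ)+1)*((d:ℝ)+2)) := by
  classical
  set M : (Fin d → ℝ) →ₗ[ℝ] (Fin d → ℝ) :=
    Matrix.mulVecLin (Matrix.of fun r i => (a i.succ - a 0) r) with hMdef
  have hM : ∀ y, M y = ∑ i, y i • (a i.succ - a 0) := by
    intro y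
    ext r
    simp only [hMdef, Matrix.mulVecLin_apply, Matrix.mulVec, dotProduct, Matrix.of_apply,
      dotProduct, Finset.sum_apply, Pi.smul_apply, smul_eq_mul]
    exact Finset.sum_congr rfl fun i _ => mul_comm _ _
  set Φ : (Fin d → ℝ) → (Fin d → ℝ) := fun y => a 0 + M y with hΦdef
  have hΦdecomp : Φ '' S d = (fun z => a 0 + z) '' (⇑M '' S d) := by
    rw [Set.image_image]
  -- image of the corner simplex is the convex hull
  have hconvexcomb : ∀ y ∈ S d, Φ y = (1 - ∑ i, y i) • a 0 + ∑ i, y i • a (Fin.succ i) := by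
    intro y _
    simp only [hΦdef]
    rw [hM, sub_smul, one_smul,
      show ∑ i, y i • (a (Fin.succ i) - a 0)
        = (∑ i, y i • a (Fin.succ i)) - ∑ i, y i • a 0 from by
        rw [← Finset.sum_sub_distrib]; exact Finset.sum_congr rfl fun i _ => smul_sub _ _ _,
      show ∑ i, y i • (a 0) = (∑ i, y i) • a 0 from (Finset.sum_smul).symm]
    abel
  have himg : Φ '' S d = convexHull ℝ (Set.range a) := by
    apply Set.Subset.antisymm
    · rintro x ⟨y, hy, rfl⟩
      rw [hconvexcomb y hy]
      have hsum : (1 - ∑ i, y i) • a 0 + ∑ i, y i • a (Fin.succ i)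
          = ∑ i : Fin (d+1), (Fin.cons (1 - ∑ i, y i) y : Fin (d+1) → ℝ) i • a i := by
        rw [Fin.sum_univ_succ]
        simp [Fin.cons_zero, Fin.cons_succ]
      rw [hsum]
      refine Convex.sum_mem (convex_convexHull ℝ _) ?_ ?_ ?_
      · intro i _
        refine Fin.cases ?_ ?_ i
        · simpa using sub_nonneg.2 hy.2
        · intro j; simpa using hy.1 j
      · rw [Fin.sum_univ_succ]
        simp
      · intro i _
        exact subset_convexHull ℝ _ (Set.mem_range_self i)
    · apply convexHull_min
      · rw [Set.range_subset_iff]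
        intro i
        refine Fin.cases ?_ ?_ i
        · refine ⟨0, ⟨fun j => le_refl 0, by simp⟩, ?_⟩
          simp [hΦdef]
        · intro j
          refine ⟨Pi.single j 1, ⟨fun i => ?_, by simp⟩, ?_⟩
          · rcases eq_or_ne i j with rfl | h
            · simp
            · simp [Pi.single_apply, h]
          · simp only [hΦdef]
            rw [hM, show ∑ i, (Pi.single j (1:ℝ) : Fin d → ℝ) i • (a (Fin.succ i) - a 0)
              = a (Fin.succ j) - a 0 from ?_]
            · abel
            · rw [Finset.sum_eq_single j]
              · simp
              · intro i _ h; simp [Pi.single_apply, h]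
              · intro h; exact absurd (Finset.mem_univ j) h
      · rw [hΦdecomp]
        exact ((convex_S d).linear_image M).translate (a 0)
  have hvol : volume (convexHull ℝ (Set.range a))
      = ENNReal.ofReal |LinearMap.det M| * volume (S d) := by
    rw [← himg, hΦdecomp, Set.image_add_left, measure_preimage_add,
      Measure.addHaar_image_linearMap]
  by_cases hdet : LinearMap.det M = 0
  · have hv0 : volume (convexHull ℝ (Set.range a)) = 0 := by
      rw [hvol, hdet]; simp
    rw [Measure.restrict_eq_zero.2 hv0, hv0]
    simp
  · -- the change of variables
    set ℓ : (Fin d → ℝ) ≃ₗ[ℝ] (Fin d → ℝ) := M.equivOfDetNeZero hdet with hl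
    have hlcoe : ⇑ℓ = ⇑M := rfl
    set meq : (Fin d → ℝ) ≃ᵐ (Fin d → ℝ) :=
      ℓ.toContinuousLinearEquiv.toHomeomorph.toMeasurableEquiv with hmeq
    have hmeqcoe : ⇑meq = ⇑M := rfl
    have hmap : Measure.map (⇑meq) volume
        = ENNReal.ofReal |(LinearMap.det M)⁻¹| • volume := by
      rw [hmeqcoe]
      exact Measure.map_linearMap_addHaar_eq_smul_addHaar volume hdet
    have hMinj : Function.Injective (⇑M) := by
      rw [← hmeqcoe]; exact meq.injective
    have hchg : ∀ G : (Fin d → ℝ) → ℝ,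
        ∫ x in ⇑M '' S d, G x = |LinearMap.det M| * ∫ y in S d, G (M y) := by
      intro G
      have h1 := setIntegral_map_equiv (μ := (volume : Measure (Fin d → ℝ))) meq G (⇑M '' S d)
      rw [hmap] at h1
      rw [show ⇑meq ⁻¹' (⇑M '' S d) = S d from by
        rw [hmeqcoe]; exact Function.Injective.preimage_image hMinj _] at h1
      simp only [hmeqcoe] at h1
      rw [Measure.restrict_smul, integral_smul_measure] at h1
      rw [ENNReal.toReal_ofReal (abs_nonneg _)] at h1
      have habs : |(LinearMap.det M)⁻¹| = |LinearMap.det M|⁻¹ := abs_inv _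
      rw [habs, smul_eq_mul] at h1
      field_simp at h1 ⊢
      linarith [h1]
    have htrans : ∫ x in convexHull ℝ (Set.range a), φ x ^ 2
        = ∫ z in ⇑M '' S d, φ (a 0 + z) ^ 2 := by
      rw [← himg, hΦdecomp]
      exact (measurePreserving_add_left volume (a 0)).setIntegral_image_emb
        (Homeomorph.addLeft (a 0)).toMeasurableEquiv.measurableEmbedding
        (fun x => φ x ^ 2) (⇑M '' S d)
    have hMy : ∀ (y : Fin d → ℝ) (j : Fin d),
        M y j = ∑ i, y i * (a (Fin.succ i) j - a 0 j) := by
      intro y j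
      rw [hM]
      simp [Finset.sum_apply]
    have hcomp : ∀ y : Fin d → ℝ, φ (a 0 + M y)
        = φ (a 0) + ∑ i, (φ (a (Fin.succ i)) - φ (a 0)) * y i := by
      intro y
      rw [hφ]
      simp only [Pi.add_apply]
      simp_rw [hMy y]
      rw [Finset.sum_congr rfl (fun j _ =>
        show w j * (a 0 j + ∑ i, y i * (a (Fin.succ i) j - a 0 j))
          = w j * a 0 j + ∑ i, (w j * (a (Fin.succ i) j - a 0 j)) * y i from by
        rw [mul_add, Finset.mul_sum]
        congr 1
        exact Finset.sum_congr rfl fun i _ => by ring)]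
      rw [Finset.sum_add_distrib, Finset.sum_comm]
      simp_rw [hφ]
      rw [Finset.sum_congr rfl (fun i (_ : i ∈ Finset.univ) =>
        show ((∑ j, w j * a (Fin.succ i) j + k) - (∑ j, w j * a 0 j + k)) * y i
          = ∑ j, (w j * (a (Fin.succ i) j - a 0 j)) * y i from by
        rw [add_sub_add_right_eq_sub, ← Finset.sum_sub_distrib, Finset.sum_mul]
        exact Finset.sum_congr rfl fun j _ => by ring)]
      ring
    rw [htrans, hchg]
    simp_rw [hcomp]
    rw [integral_sq_S d (φ (a 0)) (fun i => φ (a (Fin.succ i)) - φ (a 0))]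

    have hvolR : (volume (convexHull ℝ (Set.range a))).toReal
        = |LinearMap.det M| * (1/(Nat.factorial d)) := by
      rw [hvol, ENNReal.toReal_mul, ENNReal.toReal_ofReal (abs_nonneg _), volume_S_toReal]
    rw [hvolR]
    rw [show ∑ i : Fin d, (φ (a 0) + (φ (a (Fin.succ i)) - φ (a 0)))^2
        = ∑ i, φ (a (Fin.succ i))^2 from Finset.sum_congr rfl fun i _ => by ring]
    rw [show ∑ i : Fin d, (φ (a (Fin.succ i)) - φ (a 0))
        = (∑ i, φ (a (Fin.succ i))) - (d:ℝ) * φ (a 0) from by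
      rw [Finset.sum_sub_distrib, Finset.sum_const, Finset.card_univ, Fintype.card_fin,
        nsmul_eq_mul]]
    rw [show ∑ i : Fin (d+1), φ (a i)^2 = φ (a 0)^2 + ∑ i : Fin d, φ (a (Fin.succ i))^2 from
      Fin.sum_univ_succ _]
    rw [show ∑ i : Fin (d+1), φ (a i) = φ (a 0) + ∑ i : Fin d, φ (a (Fin.succ i)) from
      Fin.sum_univ_succ _]
    have hfac : ((Nat.factorial (d+2)):ℝ) = ((d:ℝ)+2)*(((d:ℝ)+1)*(Nat.factorial d)) := by
      rw [show d+2 = (d+1)+1 from rfl, Nat.factorial_succ, Nat.factorial_succ]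
      push_cast; ring
    rw [hfac]
    have f1 : ((d:ℝ)+1) ≠ 0 := by positivity
    have f2 : ((d:ℝ)+2) ≠ 0 := by positivity
    have f3 : ((Nat.factorial d : ℝ)) ≠ 0 := Nat.cast_ne_zero.2 (Nat.factorial_ne_zero _)
    field_simp
    ring


end Stmt12Aux

open Stmt12Aux

/-- Mass-lumping norm equivalence on a `d`-simplex: for an affine map `f`,
`(|E|/((d+1)(d+2))) Σ f(aᵢ)² ≤ ∫_E f² ≤ (|E|/(d+1)) Σ f(aᵢ)²`. -/
theorem stmt12 {d : ℕ} (a : Fin (d + 1) → EuclideanSpace ℝ (Fin d))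
    (ha : AffineIndependent ℝ a)
    (g : EuclideanSpace ℝ (Fin d)) (c : ℝ)
    (f : EuclideanSpace ℝ (Fin d) → ℝ) (hf : ∀ z, f z = ⟪g, z⟫ + c) :
    (volume (convexHull ℝ (Set.range a))).toReal / (((d : ℝ) + 1) * ((d : ℝ) + 2)) *
        ∑ i, f (a i) ^ 2 ≤ ∫ x in convexHull ℝ (Set.range a), f x ^ 2
    ∧ ∫ x in convexHull ℝ (Set.range a), f x ^ 2 ≤
        (volume (convexHull ℝ (Set.range a))).toReal / ((d : ℝ) + 1) *
          ∑ i, f (a i) ^ 2 := by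
  classical
  set e := (MeasurableEquiv.toLp 2 (Fin d → ℝ)).symm with he
  have mp := EuclideanSpace.volume_preserving_symm_measurableEquiv_toLp (Fin d)
  set a' : Fin (d+1) → (Fin d → ℝ) := fun i => e (a i) with ha'
  set φ : (Fin d → ℝ) → ℝ := fun y => f (e.symm y) with hφdef
  have hφ : ∀ z, φ z = (∑ j, g j * z j) + c := by
    intro z
    rw [hφdef]
    simp only []
    rw [hf]
    congr 1
    rw [PiLp.inner_apply]
    exact Finset.sum_congr rfl fun j _ => by simp [he, mul_comm]
  have hfa : ∀ i, φ (a' i) = f (a i) := by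
    intro i; rw [hφdef, ha']; simp
  have hl : ⇑e = ⇑(WithLp.linearEquiv 2 ℝ (Fin d → ℝ)).toLinearMap.toAffineMap := rfl
  have hhull : ⇑e '' (convexHull ℝ (Set.range a)) = convexHull ℝ (Set.range a') := by
    rw [hl, AffineMap.image_convexHull]
    congr 1
    rw [← Set.range_comp]
    rfl
  have hEmeas' : MeasurableSet (convexHull ℝ (Set.range a')) :=
    (((Set.finite_range a').isCompact_convexHull (𝕜 := ℝ)).isClosed).measurableSet
  have hpre : ⇑e ⁻¹' (convexHull ℝ (Set.range a')) = convexHull ℝ (Set.range a) := by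
    rw [← hhull, Set.preimage_image_eq _ e.injective]
  have hvolT : volume (convexHull ℝ (Set.range a)) = volume (convexHull ℝ (Set.range a')) := by
    rw [← hpre]
    exact mp.measure_preimage hEmeas'.nullMeasurableSet
  have hintT : ∫ x in convexHull ℝ (Set.range a), f x ^ 2
      = ∫ y in convexHull ℝ (Set.range a'), φ y ^ 2 := by
    rw [← hpre]
    rw [← mp.setIntegral_preimage_emb e.measurableEmbedding
      (fun y => φ y ^ 2) (convexHull ℝ (Set.range a'))]
    refine setIntegral_congr_fun ?_ fun x _ => ?_
    · rw [hpre]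
      exact (((Set.finite_range a).isCompact_convexHull (𝕜 := ℝ)).isClosed).measurableSet
    · simp [hφdef, he]
  have hval := pi_version d a' g c φ hφ
  rw [← hvolT] at hval
  simp only [hfa] at hval
  rw [hintT, hval]
  set V := (volume (convexHull ℝ (Set.range a))).toReal with hV
  set A := ∑ i, f (a i)^2 with hA
  set B := ∑ i, f (a i) with hB
  have hAnn : 0 ≤ A := Finset.sum_nonneg fun i _ => sq_nonneg _
  have hVnn : 0 ≤ V := ENNReal.toReal_nonneg
  have hK : 0 < ((d:ℝ)+1)*((d:ℝ)+2) := by positivity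
  have hB2 : B^2 ≤ ((d:ℝ)+1) * A := by
    have h := sq_sum_le_card_mul_sum_sq (s := (Finset.univ : Finset (Fin (d+1))))
      (f := fun i => f (a i))
    rw [Finset.card_univ, Fintype.card_fin] at h
    calc B^2 ≤ ((d+1 : ℕ) : ℝ) * A := by exact_mod_cast h
    _ = ((d:ℝ)+1) * A := by push_cast; ring
  have h1 : V * A ≤ V * (A + B^2) :=
    mul_le_mul_of_nonneg_left (by nlinarith [sq_nonneg B]) hVnn
  have h2 : A + B^2 ≤ ((d:ℝ)+2) * A := by nlinarith [hB2]
  constructor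
  · calc V / (((d:ℝ)+1)*((d:ℝ)+2)) * A = V * A / (((d:ℝ)+1)*((d:ℝ)+2)) := by ring
    _ ≤ V * (A + B^2) / (((d:ℝ)+1)*((d:ℝ)+2)) := by gcongr
  · calc V * (A + B^2) / (((d:ℝ)+1)*((d:ℝ)+2))
        ≤ V * (((d:ℝ)+2) * A) / (((d:ℝ)+1)*((d:ℝ)+2)) := by gcongr
    _ = V / ((d:ℝ)+1) * A := by
      have f2 : ((d:ℝ)+2) ≠ 0 := by positivity
      field_simp
end

section
/- Let E ⊂ ℝ^d be a d-simplex with vertices a_0, …, a_d and diameter h. Then for every d-simplex E, every M ≥ 0, and every function φ : ℝ^d → ℝ that is twice continuously differentiable on a neighborhood of E with ‖D²φ(x)‖ ≤ M for all x ∈ E, the affine interpolant g of φ on E (the unique affine map with g(a_i) = φ(a_i) for i = 0, …, d) satisfies sup_{x ∈ E} |φ(x) − g(x)| ≤ C h² M, where C > 0 is a constant depending only on d. -/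
open scoped RealInnerProductSpace

open Set Finset

lemma taylor2_aux {n : ℕ} {φ : EuclideanSpace ℝ (Fin n) → ℝ}
    {U : Set (EuclideanSpace ℝ (Fin n))}
    (hU : IsOpen U) (hφ : ContDiffOn ℝ 2 φ U)
    {s : Set (EuclideanSpace ℝ (Fin n))} (hs : Convex ℝ s) (hsU : s ⊆ U) {M : ℝ}
    (hM : ∀ y ∈ s, ‖iteratedFDeriv ℝ 2 φ y‖ ≤ M) {x y : EuclideanSpace ℝ (Fin n)}
    (hx : x ∈ s) (hy : y ∈ s) :
    |φ y - φ x - fderiv ℝ φ x (y - x)| ≤ M * ‖y - x‖ ^ 2 := by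
  have hM0 : 0 ≤ M := le_trans (norm_nonneg _) (hM x hx)
  have hφ1 : DifferentiableOn ℝ φ U := hφ.differentiableOn two_ne_zero
  have hd : ∀ z ∈ U, HasFDerivAt φ (fderiv ℝ φ z) z := fun z hz =>
    (hφ1.differentiableAt (hU.mem_nhds hz)).hasFDerivAt
  have hf' : ContDiffOn ℝ 1 (fderiv ℝ φ) U := by
    have := hφ.fderiv_of_isOpen hU (m := 1) (by norm_num)
    exact this
  have hf'd : ∀ z ∈ U, HasFDerivAt (fderiv ℝ φ) (fderiv ℝ (fderiv ℝ φ) z) z := fun z hz =>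
    ((hf'.differentiableOn one_ne_zero).differentiableAt (hU.mem_nhds hz)).hasFDerivAt
  have hnorm : ∀ z ∈ s, ‖fderiv ℝ (fderiv ℝ φ) z‖ ≤ M := by
    intro z hz
    have e : ‖fderiv ℝ (fderiv ℝ φ) z‖ = ‖iteratedFDeriv ℝ 2 φ z‖ := by
      rw [← norm_iteratedFDeriv_zero (𝕜 := ℝ) (f := fderiv ℝ (fderiv ℝ φ)) (x := z),
        norm_iteratedFDeriv_fderiv, norm_iteratedFDeriv_fderiv]
    rw [e]; exact hM z hz
  have lip : ∀ z ∈ s, ‖fderiv ℝ φ z - fderiv ℝ φ x‖ ≤ M * ‖z - x‖ := fun z hz =>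
    hs.norm_image_sub_le_of_norm_hasFDerivWithin_le
      (fun w hw => (hf'd w (hsU hw)).hasFDerivWithinAt) hnorm hx hz
  set G : EuclideanSpace ℝ (Fin n) → ℝ := fun z => φ z - fderiv ℝ φ x z with hG
  have hseg : segment ℝ x y ⊆ s := hs.segment_subset hx hy
  have hGd : ∀ z ∈ segment ℝ x y,
      HasFDerivWithinAt G (fderiv ℝ φ z - fderiv ℝ φ x) (segment ℝ x y) z := fun z hz =>
    ((hd z (hsU (hseg hz))).sub ((fderiv ℝ φ x).hasFDerivAt)).hasFDerivWithinAt
  have hGb : ∀ z ∈ segment ℝ x y, ‖fderiv ℝ φ z - fderiv ℝ φ x‖ ≤ M * ‖y - x‖ := by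
    intro z hz
    have hz' : z ∈ Metric.closedBall x ‖y - x‖ := by
      have : segment ℝ x y ⊆ Metric.closedBall x ‖y - x‖ :=
        (convex_closedBall x ‖y - x‖).segment_subset
          (by simp) (by simp [Metric.mem_closedBall, dist_eq_norm])
      exact this hz
    calc ‖fderiv ℝ φ z - fderiv ℝ φ x‖ ≤ M * ‖z - x‖ := lip z (hseg hz)
      _ ≤ M * ‖y - x‖ := by
          apply mul_le_mul_of_nonneg_left _ hM0
          simpa [dist_eq_norm] using hz'
  have key := (convex_segment x y).norm_image_sub_le_of_norm_hasFDerivWithin_le hGd hGb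
    (left_mem_segment ℝ x y) (right_mem_segment ℝ x y)
  have : G y - G x = φ y - φ x - fderiv ℝ φ x (y - x) := by
    simp [hG, map_sub]; ring
  rw [this] at key
  calc |φ y - φ x - fderiv ℝ φ x (y - x)| ≤ M * ‖y - x‖ * ‖y - x‖ := key
    _ = M * ‖y - x‖ ^ 2 := by ring

/-- L∞ interpolation error: there is `C > 0` depending only on `d` such
that for every `d`-simplex `E` of diameter `h`, every `φ` that is C² on a neighborhood
of `E` with `‖D²φ‖ ≤ M` on `E`, the affine interpolant of `φ` at the vertices satisfies
`|φ x - g x| ≤ C h² M` on `E`. -/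
theorem stmt13 (d : ℕ) :
    ∃ C > 0, ∀ (a : Fin (d + 1) → EuclideanSpace ℝ (Fin d)), AffineIndependent ℝ a →
      ∀ M : ℝ, 0 ≤ M →
      ∀ (φ : EuclideanSpace ℝ (Fin d) → ℝ) (U : Set (EuclideanSpace ℝ (Fin d))),
        IsOpen U → convexHull ℝ (Set.range a) ⊆ U → ContDiffOn ℝ 2 φ U →
        (∀ x ∈ convexHull ℝ (Set.range a), ‖iteratedFDeriv ℝ 2 φ x‖ ≤ M) →
      ∀ (g : EuclideanSpace ℝ (Fin d)) (cg : ℝ),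
        (∀ i, ⟪g, a i⟫ + cg = φ (a i)) →
      ∀ x ∈ convexHull ℝ (Set.range a),
        |φ x - (⟪g, x⟫ + cg)| ≤
          C * Metric.diam (convexHull ℝ (Set.range a)) ^ 2 * M := by
  refine ⟨1, one_pos, ?_⟩
  intro a _ M hM0 φ U hU hKU hφ hD2 g cg hg x hx
  set K := convexHull ℝ (Set.range a) with hK
  have hKc : Convex ℝ K := convex_convexHull ℝ _
  have hKbdd : Bornology.IsBounded K := ((Set.finite_range a).isCompact_convexHull ℝ).isBounded
  set h := Metric.diam K with hh
  have hh0 : 0 ≤ h := Metric.diam_nonneg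
  -- weights
  have hx' := hx
  rw [hK, convexHull_range_eq_exists_affineCombination] at hx'
  obtain ⟨s, w, hw0, hw1, hxw⟩ := hx'
  have hxsum : ∑ i ∈ s, w i • a i = x := by
    rw [← Finset.affineCombination_eq_linear_combination s a w hw1]; exact hxw
  set f' := fderiv ℝ φ x with hf'
  set R : Fin (d + 1) → ℝ := fun i => φ (a i) - φ x - f' (a i - x) with hR
  -- bound each remainder
  have hmem : ∀ i, a i ∈ K := fun i => subset_convexHull ℝ _ (Set.mem_range_self i)
  have hRb : ∀ i, |R i| ≤ M * h ^ 2 := by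
    intro i
    have h1 : |R i| ≤ M * ‖a i - x‖ ^ 2 :=
      taylor2_aux hU hφ hKc hKU hD2 hx (hmem i)
    refine h1.trans (mul_le_mul_of_nonneg_left ?_ hM0)
    have hd1 : ‖a i - x‖ ≤ h := by
      rw [← dist_eq_norm]
      exact Metric.dist_le_diam_of_mem hKbdd (hmem i) hx
    exact pow_le_pow_left₀ (norm_nonneg _) hd1 2
  -- the key algebraic identity
  have hsum0 : ∑ i ∈ s, w i • (a i - x) = 0 := by
    simp only [smul_sub, Finset.sum_sub_distrib, hxsum, ← Finset.sum_smul, hw1, one_smul,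
      sub_self]
  have hfx0 : ∑ i ∈ s, w i * f' (a i - x) = 0 := by
    have : ∑ i ∈ s, w i * f' (a i - x) = f' (∑ i ∈ s, w i • (a i - x)) := by
      rw [map_sum]; simp [map_smul, smul_eq_mul]
    rw [this, hsum0, map_zero]
  have hinner : ∑ i ∈ s, w i * φ (a i) = ⟪g, x⟫ + cg := by
    have : ∀ i, φ (a i) = ⟪g, a i⟫ + cg := fun i => (hg i).symm
    calc ∑ i ∈ s, w i * φ (a i) = ∑ i ∈ s, (w i * ⟪g, a i⟫ + w i * cg) := by
          simp_rw [this, mul_add]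
      _ = ⟪g, ∑ i ∈ s, w i • a i⟫ + cg := by
          rw [Finset.sum_add_distrib, ← Finset.sum_mul, hw1, one_mul, inner_sum]
          simp [real_inner_smul_right, Finset.mul_sum, mul_left_comm]
      _ = ⟪g, x⟫ + cg := by rw [hxsum]
  have hkey : φ x - (⟪g, x⟫ + cg) = -∑ i ∈ s, w i * R i := by
    have : ∑ i ∈ s, w i * R i
        = (∑ i ∈ s, w i * φ (a i)) - (∑ i ∈ s, w i) * φ x - ∑ i ∈ s, w i * f' (a i - x) := by
      simp only [hR, mul_sub]
      rw [Finset.sum_sub_distrib, Finset.sum_sub_distrib, Finset.sum_mul]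
    rw [this, hinner, hw1, hfx0, one_mul]; ring
  rw [hkey, abs_neg]
  calc |∑ i ∈ s, w i * R i| ≤ ∑ i ∈ s, |w i * R i| := Finset.abs_sum_le_sum_abs _ _
    _ ≤ ∑ i ∈ s, w i * (M * h ^ 2) := by
        refine Finset.sum_le_sum fun i hi => ?_
        rw [abs_mul, abs_of_nonneg (hw0 i hi)]
        exact mul_le_mul_of_nonneg_left (hRb i) (hw0 i hi)
    _ = M * h ^ 2 := by rw [← Finset.sum_mul, hw1, one_mul]
    _ = 1 * h ^ 2 * M := by ring
end

section
/- For every dimension d ≥ 1 and every α > 0 there exists a constant C > 0, depending only on d and α, with the following property. Let E ⊂ ℝ^d be a d-simplex with vertices a_0, …, a_d, of diameter h, containing a closed ball of diameter at least α·h. Then for every M ≥ 0 and every function φ : ℝ^d → ℝ twice continuously differentiable on a neighborhood of E with ‖D²φ(x)‖ ≤ M for all x ∈ E, the affine interpolant g of φ on E (the unique affine map with g(a_i) = φ(a_i) for i = 0, …, d) satisfies sup_{x ∈ E} ‖∇φ(x) − ∇g‖ ≤ C h M. -/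
open scoped RealInnerProductSpace

set_option maxHeartbeats 1000000

/-- Gradient interpolation error: there is `C > 0` depending only on `d`
and `α` such that for every shape-regular `d`-simplex `E` of diameter `h` (inscribed
ball of diameter `≥ α h`), every `φ` C² on a neighborhood of `E` with `‖D²φ‖ ≤ M` on
`E`, the affine interpolant (with constant gradient `g`) satisfies
`‖∇φ x - g‖ ≤ C h M` on `E`. -/
theorem stmt14 (d : ℕ) (hd : 1 ≤ d) (α : ℝ) (hα : 0 < α) :
    ∃ C > 0, ∀ (a : Fin (d + 1) → EuclideanSpace ℝ (Fin d)), AffineIndependent ℝ a →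
      ∀ (z : EuclideanSpace ℝ (Fin d)) (rad : ℝ),
        Metric.closedBall z rad ⊆ convexHull ℝ (Set.range a) →
        α * Metric.diam (convexHull ℝ (Set.range a)) ≤ 2 * rad →
      ∀ M : ℝ, 0 ≤ M →
      ∀ (φ : EuclideanSpace ℝ (Fin d) → ℝ) (U : Set (EuclideanSpace ℝ (Fin d))),
        IsOpen U → convexHull ℝ (Set.range a) ⊆ U → ContDiffOn ℝ 2 φ U →
        (∀ x ∈ convexHull ℝ (Set.range a), ‖iteratedFDeriv ℝ 2 φ x‖ ≤ M) →
      ∀ (g : EuclideanSpace ℝ (Fin d)) (cg : ℝ),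
        (∀ i, ⟪g, a i⟫ + cg = φ (a i)) →
      ∀ x ∈ convexHull ℝ (Set.range a),
        ‖gradient φ x - g‖ ≤ C * Metric.diam (convexHull ℝ (Set.range a)) * M := by
  refine ⟨1 + 6 / α, by positivity, ?_⟩
  intro a ha z rad hball hrad M hM φ U hUopen hSU hφ hM2 g cg hg x hx
  set S : Set (EuclideanSpace ℝ (Fin d)) := convexHull ℝ (Set.range a) with hS
  set h : ℝ := Metric.diam S with hh
  set L : EuclideanSpace ℝ (Fin d) →L[ℝ] ℝ :=
    (InnerProductSpace.toDual ℝ (EuclideanSpace ℝ (Fin d)) g : _ →L[ℝ] ℝ) with hL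
  have hLapp : ∀ y, L y = ⟪g, y⟫ := fun y => InnerProductSpace.toDual_apply_apply
  have hconv : Convex ℝ S := convex_convexHull ℝ _
  have hbd : Bornology.IsBounded S :=
    ((Set.finite_range a).isCompact_convexHull ℝ).isBounded
  have hmem : ∀ i, a i ∈ S := fun i => subset_convexHull ℝ _ (Set.mem_range_self i)
  have hdist : ∀ y ∈ S, ∀ y' ∈ S, ‖y' - y‖ ≤ h := by
    intro y hy y' hy'
    rw [← dist_eq_norm]
    exact Metric.dist_le_diam_of_mem hbd hy' hy
  have hh0 : 0 ≤ h := Metric.diam_nonneg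
  have hhpos : 0 < h := by
    have h01 : (0 : Fin (d + 1)) ≠ 1 := by
      have : (1 : ℕ) < d + 1 := by omega
      simp [Fin.ext_iff, Nat.mod_eq_of_lt this]
    have hne : a 0 ≠ a 1 := fun he => h01 (ha.injective he)
    have := Metric.dist_le_diam_of_mem hbd (hmem 0) (hmem 1)
    have : 0 < dist (a 0) (a 1) := dist_pos.mpr hne
    linarith [Metric.dist_le_diam_of_mem hbd (hmem 0) (hmem 1)]
  have hradpos : 0 < rad := by nlinarith
  have hzS : z ∈ S := hball (Metric.mem_closedBall_self hradpos.le)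
  -- differentiability facts
  have hdiffAt : ∀ y ∈ U, DifferentiableAt ℝ φ y := by
    intro y hy
    exact (hφ.contDiffAt (hUopen.mem_nhds hy)).differentiableAt (by norm_num)
  have hD2 : ∀ y ∈ U, DifferentiableAt ℝ (fderiv ℝ φ) y := by
    intro y hy
    have : ContDiffAt ℝ 1 (fderiv ℝ φ) y :=
      (hφ.contDiffAt (hUopen.mem_nhds hy)).fderiv_right (by norm_num)
    exact this.differentiableAt (by norm_num)
  -- bound on second derivative
  have hB : ∀ y ∈ S, ‖fderiv ℝ (fderiv ℝ φ) y‖ ≤ M := by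
    intro y hy
    refine ContinuousLinearMap.opNorm_le_bound _ hM fun u => ?_
    refine ContinuousLinearMap.opNorm_le_bound _ (by positivity) fun v => ?_
    have he : fderiv ℝ (fderiv ℝ φ) y u v = iteratedFDeriv ℝ 2 φ y ![u, v] := by
      rw [iteratedFDeriv_two_apply]
      simp
    rw [he]
    calc ‖iteratedFDeriv ℝ 2 φ y ![u, v]‖
        ≤ ‖iteratedFDeriv ℝ 2 φ y‖ * ∏ i, ‖(![u, v]) i‖ :=
          (iteratedFDeriv ℝ 2 φ y).le_opNorm _
      _ ≤ M * (‖u‖ * ‖v‖) := by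
          simp only [Fin.prod_univ_two, Matrix.cons_val_zero, Matrix.cons_val_one,
            Matrix.head_cons]
          gcongr
          exact hM2 y hy
      _ = M * ‖u‖ * ‖v‖ := by ring
  -- Lipschitz bound on fderiv
  have hDlip : ∀ y ∈ S, ∀ y' ∈ S, ‖fderiv ℝ φ y' - fderiv ℝ φ y‖ ≤ M * ‖y' - y‖ := by
    intro y hy y' hy'
    exact hconv.norm_image_sub_le_of_norm_hasFDerivWithin_le
      (fun t ht => ((hD2 t (hSU ht)).hasFDerivAt).hasFDerivWithinAt)
      (fun t ht => hB t ht) hy hy'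
  -- Taylor estimate
  have hT : ∀ y ∈ S, ∀ y' ∈ S,
      ‖φ y' - φ y - fderiv ℝ φ y (y' - y)‖ ≤ M * ‖y' - y‖ * ‖y' - y‖ := by
    intro y hy y' hy'
    have hseg : segment ℝ y y' ⊆ S := hconv.segment_subset hy hy'
    have hsub : ∀ t ∈ segment ℝ y y', ‖t - y‖ ≤ ‖y' - y‖ := by
      intro t ht
      rcases ht with ⟨u, v, hu, hv, huv, rfl⟩
      have : u • y + v • y' - y = v • (y' - y) := by
        have hu1 : u = 1 - v := by linarith
        rw [hu1, sub_smul, one_smul, smul_sub]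
        abel
      rw [this, norm_smul, Real.norm_eq_abs, abs_of_nonneg hv]
      nlinarith [norm_nonneg (y' - y)]
    exact (convex_segment y y').norm_image_sub_le_of_norm_hasFDerivWithin_le'
      (f := φ) (f' := fderiv ℝ φ) (φ := fderiv ℝ φ y)
      (fun t ht => ((hdiffAt t (hSU (hseg ht))).hasFDerivAt).hasFDerivWithinAt)
      (fun t ht => le_trans (hDlip y hy t (hseg ht))
        (by have := hsub t ht; nlinarith))
      (left_mem_segment ℝ y y') (right_mem_segment ℝ y y')
  -- interpolation error on function values
  have hpsi : ∀ y ∈ S, ‖φ y - (L y + cg)‖ ≤ M * h * h := by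
    intro y hy
    rw [hS, convexHull_range_eq_exists_affineCombination] at hy
    obtain ⟨s, w, hw0, hw1, hwy⟩ := hy
    rw [Finset.affineCombination_eq_linear_combination s a w hw1] at hwy
    have hyS : y ∈ S := by
      rw [← hwy, hS, convexHull_range_eq_exists_affineCombination]
      exact ⟨s, w, hw0, hw1, Finset.affineCombination_eq_linear_combination s a w hw1⟩
    set D := fderiv ℝ φ y with hD
    have key : φ y - (L y + cg) = -∑ i ∈ s, w i * (φ (a i) - φ y - D (a i - y)) := by
      have e1 : ∑ i ∈ s, w i * φ (a i) = L y + cg := by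
        have : ∀ i ∈ s, w i * φ (a i) = w i * L (a i) + w i * cg := by
          intro i _
          rw [hLapp, ← hg i]
          ring
        rw [Finset.sum_congr rfl this, Finset.sum_add_distrib, ← Finset.sum_mul, hw1,
          one_mul]
        congr 1
        have : ∀ i ∈ s, w i * L (a i) = L (w i • a i) := by
          intro i _; rw [map_smul]; simp
        rw [Finset.sum_congr rfl this, ← map_sum, hwy]
      have e2 : ∑ i ∈ s, w i * D (a i - y) = 0 := by
        have : ∀ i ∈ s, w i * D (a i - y) = D (w i • (a i - y)) := by
          intro i _; rw [map_smul]; simp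
        rw [Finset.sum_congr rfl this, ← map_sum]
        have : ∑ i ∈ s, w i • (a i - y) = 0 := by
          simp only [smul_sub, Finset.sum_sub_distrib, hwy, ← Finset.sum_smul, hw1, one_smul,
            sub_self]
        rw [this, map_zero]
      have e3 : ∑ i ∈ s, w i * φ y = φ y := by
        rw [← Finset.sum_mul, hw1, one_mul]
      have expand : ∑ i ∈ s, w i * (φ (a i) - φ y - D (a i - y))
          = (∑ i ∈ s, w i * φ (a i)) - (∑ i ∈ s, w i * φ y)
            - ∑ i ∈ s, w i * D (a i - y) := by
        rw [← Finset.sum_sub_distrib, ← Finset.sum_sub_distrib]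
        congr 1
        ext i
        ring
      rw [expand, e1, e2, e3]
      ring
    rw [key, norm_neg]
    calc ‖∑ i ∈ s, w i * (φ (a i) - φ y - D (a i - y))‖
        ≤ ∑ i ∈ s, ‖w i * (φ (a i) - φ y - D (a i - y))‖ := norm_sum_le _ _
      _ ≤ ∑ i ∈ s, w i * (M * h * h) := by
          refine Finset.sum_le_sum fun i hi => ?_
          rw [norm_mul, Real.norm_eq_abs (w i), abs_of_nonneg (hw0 i hi)]
          refine mul_le_mul_of_nonneg_left ?_ (hw0 i hi)
          calc ‖φ (a i) - φ y - D (a i - y)‖ ≤ M * ‖a i - y‖ * ‖a i - y‖ :=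
                hT y hyS (a i) (hmem i)
            _ ≤ M * h * h := by
                have hn := hdist y hyS (a i) (hmem i)
                have h0 := norm_nonneg (a i - y)
                nlinarith [mul_le_mul hn hn h0 hh0]
      _ = M * h * h := by rw [← Finset.sum_mul, hw1, one_mul]
  -- bound at the center
  have hz : ‖fderiv ℝ φ z - L‖ ≤ 3 * M * h * h / rad := by
    refine ContinuousLinearMap.opNorm_le_bound _ (by positivity) fun v => ?_
    rcases eq_or_ne v 0 with rfl | hv
    · simp
    have hvn : (0 : ℝ) < ‖v‖ := norm_pos_iff.mpr hv
    set y' : EuclideanSpace ℝ (Fin d) := z + (rad * ‖v‖⁻¹) • v with hy'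
    have hy'ball : y' ∈ Metric.closedBall z rad := by
      rw [Metric.mem_closedBall, dist_eq_norm, hy']
      rw [show z + (rad * ‖v‖⁻¹) • v - z = (rad * ‖v‖⁻¹) • v by abel]
      rw [norm_smul, Real.norm_eq_abs, abs_of_nonneg (by positivity)]
      rw [mul_assoc, inv_mul_cancel₀ hvn.ne', mul_one]
    have hy'S : y' ∈ S := hball hy'ball
    have hy'z : y' - z = (rad * ‖v‖⁻¹) • v := by rw [hy']; abel
    have hradh : rad ≤ h := by
      have := hdist z hzS y' hy'S
      rw [hy'z, norm_smul, Real.norm_eq_abs, abs_of_nonneg (by positivity)] at this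
      rw [mul_assoc, inv_mul_cancel₀ hvn.ne', mul_one] at this
      exact this
    have hTz := hT z hzS y' hy'S
    have hpz := hpsi z hzS
    have hpy' := hpsi y' hy'S
    have hnorm : ‖y' - z‖ = rad := by
      rw [hy'z, norm_smul, Real.norm_eq_abs, abs_of_nonneg (by positivity),
        mul_assoc, inv_mul_cancel₀ hvn.ne', mul_one]
    have keyval : ‖(fderiv ℝ φ z - L) (y' - z)‖ ≤ 3 * M * h * h := by
      have hid : (fderiv ℝ φ z - L) (y' - z)
          = (φ y' - (L y' + cg)) - (φ z - (L z + cg))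
            - (φ y' - φ z - fderiv ℝ φ z (y' - z)) := by
        simp only [ContinuousLinearMap.sub_apply, map_sub]
        ring
      rw [hid]
      have h1 : ‖φ y' - φ z - fderiv ℝ φ z (y' - z)‖ ≤ M * h * h := by
        rw [hnorm] at hTz
        nlinarith [mul_le_mul hradh hradh hradpos.le hh0]
      calc ‖(φ y' - (L y' + cg)) - (φ z - (L z + cg))
            - (φ y' - φ z - fderiv ℝ φ z (y' - z))‖
          ≤ ‖(φ y' - (L y' + cg)) - (φ z - (L z + cg))‖
            + ‖φ y' - φ z - fderiv ℝ φ z (y' - z)‖ := norm_sub_le _ _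
        _ ≤ (‖φ y' - (L y' + cg)‖ + ‖φ z - (L z + cg)‖)
            + ‖φ y' - φ z - fderiv ℝ φ z (y' - z)‖ := by
              gcongr
              exact norm_sub_le _ _
        _ ≤ (M * h * h + M * h * h) + M * h * h := by gcongr
        _ = 3 * M * h * h := by ring
    have hvexp : (fderiv ℝ φ z - L) v = (‖v‖ / rad) * ((fderiv ℝ φ z - L) (y' - z)) := by
      rw [hy'z, map_smul]
      simp only [smul_eq_mul]
      field_simp
    rw [hvexp, norm_mul, Real.norm_eq_abs, abs_of_nonneg (by positivity)]
    calc ‖v‖ / rad * ‖(fderiv ℝ φ z - L) (y' - z)‖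
        ≤ ‖v‖ / rad * (3 * M * h * h) := by gcongr
      _ = 3 * M * h * h / rad * ‖v‖ := by ring
  -- conclusion
  have hgrad : ‖gradient φ x - g‖ = ‖fderiv ℝ φ x - L‖ := by
    have : gradient φ x - g
        = (InnerProductSpace.toDual ℝ (EuclideanSpace ℝ (Fin d))).symm (fderiv ℝ φ x - L) := by
      rw [map_sub, gradient, hL, LinearIsometryEquiv.symm_apply_apply]
    rw [this, LinearIsometryEquiv.norm_map]
  rw [hgrad]
  have step1 : ‖fderiv ℝ φ x - L‖ ≤ ‖fderiv ℝ φ x - fderiv ℝ φ z‖ + ‖fderiv ℝ φ z - L‖ :=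
    norm_sub_le_norm_sub_add_norm_sub _ _ _
  have step2 : ‖fderiv ℝ φ x - fderiv ℝ φ z‖ ≤ M * h := by
    have := hDlip z hzS x hx
    have hxz := hdist z hzS x hx
    nlinarith [norm_nonneg (x - z), norm_nonneg (fderiv ℝ φ x - fderiv ℝ φ z)]
  have step3 : 3 * M * h * h / rad ≤ 6 / α * (M * h) := by
    rw [div_le_iff₀ hradpos]
    have h1 : 6 / α * (M * h) * rad * α = 6 * M * h * rad := by field_simp
    have h2 : 3 * M * h * (α * h) ≤ 3 * M * h * (2 * rad) :=
      mul_le_mul_of_nonneg_left hrad (by positivity)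
    nlinarith
  calc ‖fderiv ℝ φ x - L‖ ≤ M * h + 3 * M * h * h / rad := by
        have := le_trans step1 (add_le_add step2 hz)
        linarith
    _ ≤ M * h + 6 / α * (M * h) := by linarith
    _ = (1 + 6 / α) * h * M := by ring
end

section
/- Let E ⊂ ℝ^d be a d-simplex with vertices a_0, …, a_d and diameter h, and let u, v : ℝ^d → ℝ be affine maps with constant gradient vectors ∇u and ∇v. Let w be the affine interpolant of the product uv on E, i.e., the unique affine map with w(a_i) = u(a_i)·v(a_i) for i = 0, …, d. Then ∫_E |u(x)v(x) − w(x)| dx ≤ C h² |E| ‖∇u‖ ‖∇v‖, where C > 0 is a constant depending only on d and |E| is the Lebesgue measure of E. -/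
open MeasureTheory
open scoped RealInnerProductSpace

/-- Mass-lumping consistency: there is `C > 0` depending only on `d` such
that for every `d`-simplex `E` of diameter `h` and affine maps `u, v` with constant
gradients `gu, gv`, the affine interpolant `w` of `u·v` at the vertices satisfies
`∫_E |u v - w| ≤ C h² |E| ‖gu‖ ‖gv‖`. -/
theorem stmt15 (d : ℕ) :
    ∃ C > 0, ∀ (a : Fin (d + 1) → EuclideanSpace ℝ (Fin d)), AffineIndependent ℝ a →
      ∀ (gu gv gw : EuclideanSpace ℝ (Fin d)) (cu cv cw : ℝ)
        (u v w : EuclideanSpace ℝ (Fin d) → ℝ),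
        (∀ x, u x = ⟪gu, x⟫ + cu) → (∀ x, v x = ⟪gv, x⟫ + cv) →
        (∀ x, w x = ⟪gw, x⟫ + cw) →
        (∀ i, w (a i) = u (a i) * v (a i)) →
        ∫ x in convexHull ℝ (Set.range a), |u x * v x - w x| ≤
          C * Metric.diam (convexHull ℝ (Set.range a)) ^ 2 *
            (volume (convexHull ℝ (Set.range a))).toReal * ‖gu‖ * ‖gv‖ := by
  refine ⟨1, one_pos, fun a _ gu gv gw cu cv cw u v w hu hv hw hwa => ?_⟩
  set E := convexHull ℝ (Set.range a) with hE
  have hcomp : IsCompact E := (Set.finite_range a).isCompact_convexHull ℝ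
  have hbdd := hcomp.isBounded
  set M : ℝ := Metric.diam E ^ 2 * ‖gu‖ * ‖gv‖ with hM
  -- pointwise bound
  have hpt : ∀ x ∈ E, |u x * v x - w x| ≤ M := by
    intro x hxE
    have hx := hxE
    rw [hE, convexHull_range_eq_exists_affineCombination] at hx
    obtain ⟨s, wt, hwt0, hwt1, hxw⟩ := hx
    have hx' : x = ∑ i ∈ s, wt i • a i := by
      rw [← hxw, Finset.affineCombination_eq_linear_combination s a wt hwt1]
    have hsum : ∀ (g : EuclideanSpace ℝ (Fin d)) (c : ℝ),
        ∑ i ∈ s, wt i * (⟪g, a i⟫ + c) = ⟪g, x⟫ + c := by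
      intro g c
      have h1 : ⟪g, x⟫ = ∑ i ∈ s, wt i * ⟪g, a i⟫ := by
        rw [hx', inner_sum]
        exact Finset.sum_congr rfl fun i _ => real_inner_smul_right g (a i) (wt i)
      rw [h1]
      rw [Finset.sum_congr rfl (fun i _ => mul_add (wt i) _ c), Finset.sum_add_distrib,
        ← Finset.sum_mul, hwt1, one_mul]
    have h1 : ∑ i ∈ s, wt i * u (a i) = u x := by
      simp_rw [hu]; exact hsum gu cu
    have h2 : ∑ i ∈ s, wt i * v (a i) = v x := by
      simp_rw [hv]; exact hsum gv cv
    have h3 : ∑ i ∈ s, wt i * (u (a i) * v (a i)) = w x := by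
      simp_rw [← hwa, hw]; exact hsum gw cw
    have hid : w x - u x * v x
        = ∑ i ∈ s, wt i * ((u (a i) - u x) * (v (a i) - v x)) := by
      have hexp : ∑ i ∈ s, wt i * ((u (a i) - u x) * (v (a i) - v x))
          = (∑ i ∈ s, wt i * (u (a i) * v (a i))) - (∑ i ∈ s, wt i * u (a i)) * v x
            - (∑ i ∈ s, wt i * v (a i)) * u x + (∑ i ∈ s, wt i) * (u x * v x) := by
        rw [Finset.sum_mul, Finset.sum_mul, Finset.sum_mul,
          ← Finset.sum_sub_distrib, ← Finset.sum_sub_distrib, ← Finset.sum_add_distrib]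
        exact Finset.sum_congr rfl fun i _ => by ring
      rw [hexp, h1, h2, h3, hwt1]; ring
    have hbound : ∀ i ∈ s,
        |wt i * ((u (a i) - u x) * (v (a i) - v x))| ≤ wt i * M := by
      intro i hi
      have hai : a i ∈ E := subset_convexHull ℝ _ ⟨i, rfl⟩
      have hdu : |u (a i) - u x| ≤ ‖gu‖ * Metric.diam E := by
        rw [hu, hu]
        have heq : (⟪gu, a i⟫ + cu) - (⟪gu, x⟫ + cu) = ⟪gu, a i - x⟫ := by
          rw [inner_sub_right]; ring
        rw [heq]
        calc |⟪gu, a i - x⟫| ≤ ‖gu‖ * ‖a i - x‖ := abs_real_inner_le_norm _ _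
          _ ≤ ‖gu‖ * Metric.diam E := by
              refine mul_le_mul_of_nonneg_left ?_ (norm_nonneg _)
              rw [← dist_eq_norm]
              exact Metric.dist_le_diam_of_mem hbdd hai hxE
      have hdv : |v (a i) - v x| ≤ ‖gv‖ * Metric.diam E := by
        rw [hv, hv]
        have heq : (⟪gv, a i⟫ + cv) - (⟪gv, x⟫ + cv) = ⟪gv, a i - x⟫ := by
          rw [inner_sub_right]; ring
        rw [heq]
        calc |⟪gv, a i - x⟫| ≤ ‖gv‖ * ‖a i - x‖ := abs_real_inner_le_norm _ _
          _ ≤ ‖gv‖ * Metric.diam E := by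
              refine mul_le_mul_of_nonneg_left ?_ (norm_nonneg _)
              rw [← dist_eq_norm]
              exact Metric.dist_le_diam_of_mem hbdd hai hxE
      rw [abs_mul, abs_mul, abs_of_nonneg (hwt0 i hi)]
      calc wt i * (|u (a i) - u x| * |v (a i) - v x|)
          ≤ wt i * ((‖gu‖ * Metric.diam E) * (‖gv‖ * Metric.diam E)) := by
            refine mul_le_mul_of_nonneg_left ?_ (hwt0 i hi)
            exact mul_le_mul hdu hdv (abs_nonneg _)
              (mul_nonneg (norm_nonneg _) Metric.diam_nonneg)
        _ = wt i * M := by rw [hM]; ring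
    calc |u x * v x - w x|
        = |∑ i ∈ s, wt i * ((u (a i) - u x) * (v (a i) - v x))| := by
          rw [abs_sub_comm, hid]
      _ ≤ ∑ i ∈ s, |wt i * ((u (a i) - u x) * (v (a i) - v x))| :=
          Finset.abs_sum_le_sum_abs _ _
      _ ≤ ∑ i ∈ s, wt i * M := Finset.sum_le_sum hbound
      _ = M := by rw [← Finset.sum_mul, hwt1, one_mul]
  -- continuity
  have hcu : Continuous u := by
    have : u = fun x => ⟪gu, x⟫ + cu := funext hu
    rw [this]; exact (continuous_const.inner continuous_id).add continuous_const
  have hcv : Continuous v := by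
    have : v = fun x => ⟪gv, x⟫ + cv := funext hv
    rw [this]; exact (continuous_const.inner continuous_id).add continuous_const
  have hcw : Continuous w := by
    have : w = fun x => ⟪gw, x⟫ + cw := funext hw
    rw [this]; exact (continuous_const.inner continuous_id).add continuous_const
  have hcont : Continuous fun x : EuclideanSpace ℝ (Fin d) => |u x * v x - w x| :=
    ((hcu.mul hcv).sub hcw).abs
  have hvol : volume E < ⊤ := hcomp.measure_lt_top
  have hint : ∫ x in E, |u x * v x - w x| ≤ M * (volume E).toReal := by
    refine le_trans (le_abs_self _) ?_
    have := norm_setIntegral_le_of_norm_le_const (μ := volume) (s := E) (C := M)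
      (f := fun x => |u x * v x - w x|) hvol
      (fun x hx => by rw [Real.norm_eq_abs, abs_abs]; exact hpt x hx)
    simpa [Real.norm_eq_abs, measureReal_def] using this
  calc ∫ x in E, |u x * v x - w x| ≤ M * (volume E).toReal := hint
    _ = 1 * Metric.diam E ^ 2 * (volume E).toReal * ‖gu‖ * ‖gv‖ := by rw [hM]; ring
end
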